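/- For the discrete operator A_h* with well-prepared field E_j = (2T₀/√ρ_{∞,j})(√ρ_{∞,j+1} − √ρ_{∞,j−1})/(2Δx_j), discrete mass conservation holds: Σ_j Δx_j (A_h* u)_j √ρ_{∞,j} = 0 for every grid vector u. -/

import Mathlib

/-!
Write `s = √ρ_∞`. The choice of `E` turns `Δx_j (A_h* u)_j s_j` into
`-(√T₀/2)` times the discrete product rule
`(u_{j+1} - u_{j-1}) s_j + u_j (s_{j+1} - s_{j-1}) = F_j - F_{j-1}`,
with the product flux `F_j = u_{j+1} s_j + u_j s_{j+1}`; summed over the periodic mesh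
this telescopes to zero.
-/

/-- Discrete adjoint operator
`(A_h* u)_j = −√T₀[(u_{j+1} − u_{j−1})/(2Δx_j) + (E_j/(2T₀))u_j]`
on a periodic mesh indexed by `ZMod N`. -/
noncomputable def AhStar {N : ℕ} (T₀ : ℝ) (Δx E u : ZMod N → ℝ) : ZMod N → ℝ :=
  fun j => -(Real.sqrt T₀ * ((u (j + 1) - u (j - 1)) / (2 * Δx j) + E j / (2 * T₀) * u j))

theorem Fintype.sum_sub_comp_sub_eq_zero {G M : Type*} [AddGroup G] [Fintype G]
    [AddCommGroup M] (F : G → M) (a : G) :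
    ∑ j, (F j - F (j - a)) = 0 := by
  rw [Finset.sum_sub_distrib, sub_eq_zero]
  exact ((Equiv.subRight a).sum_comp F).symm

def productFlux {N : ℕ} (u s : ZMod N → ℝ) (j : ZMod N) : ℝ :=
  u (j + 1) * s j + u j * s (j + 1)

theorem mul_AhStar_mul_eq_productFlux_sub {N : ℕ} {T₀ : ℝ} (hT₀ : T₀ ≠ 0)
    {Δx s E : ZMod N → ℝ} (u : ZMod N → ℝ) {j : ZMod N} (hΔx : Δx j ≠ 0) (hs : s j ≠ 0)
    (hE : E j = 2 * T₀ / s j * ((s (j + 1) - s (j - 1)) / (2 * Δx j))) :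
    Δx j * AhStar T₀ Δx E u j * s j
      = -(Real.sqrt T₀ / 2) * (productFlux u s j - productFlux u s (j - 1)) := by
  simp only [AhStar, productFlux, hE, sub_add_cancel]
  field_simp
  ring

/-- with the well-prepared field
`E_j = (2T₀/√ρ_{∞,j})(√ρ_{∞,j+1} − √ρ_{∞,j−1})/(2Δx_j)`, discrete mass
conservation holds: `Σ_j Δx_j (A_h* u)_j √ρ_{∞,j} = 0` for every grid vector `u`. -/
theorem discrete_mass_conservation
    {N : ℕ} [NeZero N]
    (T₀ : ℝ) (hT₀ : 0 < T₀)
    (Δx : ZMod N → ℝ) (hΔx : ∀ j, 0 < Δx j)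
    (ρ : ZMod N → ℝ) (hρ : ∀ j, 0 < ρ j)
    (E : ZMod N → ℝ)
    (hE : ∀ j, E j = 2 * T₀ / Real.sqrt (ρ j)
      * ((Real.sqrt (ρ (j + 1)) - Real.sqrt (ρ (j - 1))) / (2 * Δx j)))
    (u : ZMod N → ℝ) :
    ∑ j : ZMod N, Δx j * AhStar T₀ Δx E u j * Real.sqrt (ρ j) = 0 := by
  have hterm (j : ZMod N) :=
    mul_AhStar_mul_eq_productFlux_sub (s := fun j => Real.sqrt (ρ j)) hT₀.ne' u
      (hΔx j).ne' (Real.sqrt_pos.mpr (hρ j)).ne' (hE j)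
  rw [Finset.sum_congr rfl fun j _ => hterm j, ← Finset.mul_sum,
    Fintype.sum_sub_comp_sub_eq_zero, mul_zero]
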